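/- Let n ≥ 5 be an odd integer, let F be a finite field of odd cardinality q, and let g₀ ∈ SL_n(F) be the diagonal matrix diag(1, −1, −1, …, −1) (with a single entry 1 and n−1 entries −1); note g₀ ∈ SL_n(F) since n − 1 is even. Let C be the conjugacy class in G = PSL_n(F) of the image h₀ of g₀. Then the graph Γ(C) has no edges, and the action of G on the set of right cosets of the order-2 subgroup ⟨h₀⟩ by right multiplication is binary. -/

import Mathlib

open scoped Pointwise MatrixGroups

/-- Right multiplication action of `g : G` on the set of right cosets of `H` in `G`. -/
def rightCosetMul {G : Type*} [Group G] (H : Subgroup G) (g : G) :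
    Quotient (QuotientGroup.rightRel H) → Quotient (QuotientGroup.rightRel H) :=
  Quotient.map (fun x => x * g) (fun x y h => by
    have h' := QuotientGroup.rightRel_apply.mp h
    exact QuotientGroup.rightRel_apply.mpr (by simpa [mul_assoc] using h'))

/-- The action of `G` on the right cosets of `H` is binary. -/
def IsBinaryCosetAction {G : Type*} [Group G] (H : Subgroup G) : Prop :=
  ∀ (n : ℕ) (I J : Fin n → Quotient (QuotientGroup.rightRel H)),
    (∀ i j : Fin n, ∃ g : G,
        rightCosetMul H g (I i) = J i ∧ rightCosetMul H g (I j) = J j) →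
    ∃ g : G, ∀ k, rightCosetMul H g (I k) = J k

/-- The adjacency relation of the graph `Γ(C)`. -/
def gammaAdj {G : Type*} [Group G] (C : Set G) (x y : G) : Prop :=
  x ∈ C ∧ y ∈ C ∧ x ≠ y ∧ Commute x y ∧ (x * y⁻¹ ∈ C ∨ y * x⁻¹ ∈ C)

/-!
Every element of `C` is an involution. The centre of `SL_n(F)` consists of scalars whose order
divides the odd number `n`, so it contains no involution; hence lifts to `SL_n(F)` of commuting
involutions of `PSL_n(F)` commute, and an involution of `SL_n(F)` lying over an element of `C` is
itself `SL_n(F)`-conjugate to `g₀`. An edge `x, y` of `Γ(C)` would therefore give commuting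
conjugates `X`, `Y`, `XY` of `g₀`, each of the form `-1 + (rank one)`, and then
`2 = (X + 1) + (Y + 1) - X (XY + 1)` writes the invertible matrix `2` as a sum of three matrices
of rank at most one, forcing `n ≤ 3`.

For binarity, the elements moving the coset `Ha` to `Hb` form the two-element set `a⁻¹Hb`.
Pairwise intersecting two-element sets either share a point or contain a triangle
`{u, v}, {u, w}, {v, w}`, and such a triangle yields the edge `u⁻¹v, u⁻¹w` of `Γ(C)`.
-/

namespace Matrix

variable {m n F : Type*} [Fintype n] [Field F]

theorem rank_add_le (A B : Matrix m n F) : (A + B).rank ≤ A.rank + B.rank := by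
  rw [rank, rank, rank, mulVecLin_add]
  exact (Submodule.finrank_mono (LinearMap.range_add_le _ _)).trans
    (Submodule.finrank_add_le_finrank_add_finrank _ _)

variable [Fintype m] [DecidableEq m]

theorem rank_diagonal_add_one_le_one {d : m → F} (i₀ : m) (hd : ∀ i ≠ i₀, d i = -1) :
    (diagonal d + 1).rank ≤ 1 := by
  classical
  rw [← diagonal_one, diagonal_add, rank_diagonal, Fintype.card_le_one_iff_subsingleton]
  refine ⟨fun ⟨i, hi⟩ ⟨j, hj⟩ => Subtype.ext ?_⟩
  have key : ∀ k, d k + 1 ≠ 0 → k = i₀ := fun k hk => by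
    by_contra hne
    exact hk (by rw [hd k hne, neg_add_cancel])
  exact (key i hi).trans (key j hj).symm

theorem card_le_three_of_rank_add_one_le_one (h2 : (2 : F) ≠ 0) {A B : Matrix m m F}
    (hA2 : A * A = 1) (hA : (A + 1).rank ≤ 1) (hB : (B + 1).rank ≤ 1)
    (hAB : (A * B + 1).rank ≤ 1) : Fintype.card m ≤ 3 := by
  have hdecomp : (2 : Matrix m m F) = (A + 1) + (B + 1) + -A * (A * B + 1) := by
    have : -A * (A * B + 1) = -(A * A) * B - A := by noncomm_ring
    rw [this, hA2, one_add_one_eq_two.symm]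
    noncomm_ring
  have hunit : IsUnit (2 : Matrix m m F) := by
    simpa only [map_ofNat] using h2.isUnit.map (algebraMap F (Matrix m m F))
  calc Fintype.card m = (2 : Matrix m m F).rank := (rank_of_isUnit _ hunit).symm
    _ ≤ (A + 1).rank + (B + 1).rank + (-A * (A * B + 1)).rank := by
      rw [hdecomp]
      grw [rank_add_le, rank_add_le]
    _ ≤ 1 + 1 + 1 := by grw [hA, hB, rank_mul_le_right, hAB]

end Matrix

namespace Matrix.SpecialLinearGroup

variable {n R : Type*} [Fintype n] [DecidableEq n] [CommRing R]

theorem rank_add_one_eq_of_isConj {g h : SpecialLinearGroup n R} (hgh : IsConj g h) :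
    ((h : Matrix n n R) + 1).rank = ((g : Matrix n n R) + 1).rank := by
  obtain ⟨c, rfl⟩ := isConj_iff.mp hgh
  have hconj : ((c * g * c⁻¹ : SpecialLinearGroup n R) : Matrix n n R) + 1 =
      (c : Matrix n n R) * ((g : Matrix n n R) + 1) *
        ((c⁻¹ : SpecialLinearGroup n R) : Matrix n n R) := by
    rw [Matrix.mul_add, Matrix.add_mul, Matrix.mul_one, ← coe_mul, ← coe_mul, ← coe_mul,
      mul_inv_cancel, coe_one]
  rw [hconj, rank_mul_eq_left_of_isUnit_det _ _ (by rw [det_coe]; exact isUnit_one),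
    rank_mul_eq_right_of_isUnit_det _ _ (by rw [det_coe]; exact isUnit_one)]

theorem eq_one_of_mem_center_of_sq_eq_one (hn : Odd (Fintype.card n))
    {z : SpecialLinearGroup n R} (hz : z ∈ Subgroup.center (SpecialLinearGroup n R))
    (hz2 : z ^ 2 = 1) : z = 1 := by
  obtain ⟨r, hrn, hr⟩ := mem_center_iff.mp hz
  obtain ⟨i⟩ : Nonempty n := Fintype.card_pos_iff.mp hn.pos
  have hr2 : r ^ 2 = 1 := by
    simpa [← hr, sq] using
      congr_arg (fun M : SpecialLinearGroup n R => (M : Matrix n n R) i i) hz2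
  have hr1 : r = 1 := (pow_eq_one_iff_of_coprime (Nat.coprime_two_right.mpr hn)).mp ⟨hrn, hr2⟩
  ext : 1
  simp [← hr, hr1]

end Matrix.SpecialLinearGroup

section Involutions

variable {G : Type*} [Group G] {h : G}

theorem sq_eq_one_of_isConj (hh : h ^ 2 = 1) {x : G} (hx : IsConj h x) : x ^ 2 = 1 := by
  obtain ⟨c, rfl⟩ := isConj_iff.mp hx
  rw [conj_pow, hh, mul_one, mul_inv_cancel]

theorem inv_eq_self_of_isConj (hh : h ^ 2 = 1) {x : G} (hx : IsConj h x) : x⁻¹ = x :=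
  inv_eq_of_mul_eq_one_right (by rw [← sq]; exact sq_eq_one_of_isConj hh hx)

end Involutions

section QuotientByCenter

variable {G : Type*} [Group G]

theorem exists_isConj_mk_eq {N : Subgroup G} [N.Normal] {g : G} {x : G ⧸ N}
    (hx : IsConj (g : G ⧸ N) x) : ∃ X : G, IsConj g X ∧ (X : G ⧸ N) = x := by
  obtain ⟨c, rfl⟩ := isConj_iff.mp hx
  obtain ⟨c, rfl⟩ := QuotientGroup.mk_surjective c
  exact ⟨c * g * c⁻¹, isConj_iff.mpr ⟨c, rfl⟩, rfl⟩

theorem eq_of_mk_eq_of_sq_eq_one (hZ : ∀ z ∈ Subgroup.center G, z ^ 2 = 1 → z = 1) {x y : G}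
    (hxy : (x : G ⧸ Subgroup.center G) = y) (hx : x ^ 2 = 1) (hy : y ^ 2 = 1) : x = y := by
  have hc : x⁻¹ * y ∈ Subgroup.center G := QuotientGroup.eq.mp hxy
  refine inv_mul_eq_one.mp (hZ _ hc ?_)
  calc (x⁻¹ * y) ^ 2 = x⁻¹ * (y * (x⁻¹ * y)) := by rw [sq]; group
    _ = x⁻¹ * ((x⁻¹ * y) * y) := by rw [Subgroup.mem_center_iff.mp hc y]
    _ = (x ^ 2)⁻¹ * y ^ 2 := by rw [sq, sq]; group
    _ = 1 := by rw [hx, hy, inv_one, one_mul]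

theorem commute_of_commute_mk (hZ : ∀ z ∈ Subgroup.center G, z ^ 2 = 1 → z = 1) {x y : G}
    (hx : x ^ 2 = 1) (hxy : Commute (x : G ⧸ Subgroup.center G) y) : Commute x y := by
  have hmk : ((y * x * y⁻¹ : G) : G ⧸ Subgroup.center G) = x := by
    rw [QuotientGroup.mk_mul, QuotientGroup.mk_mul, QuotientGroup.mk_inv, ← hxy.eq,
      mul_inv_cancel_right]
  have hconj : y * x * y⁻¹ = x :=
    eq_of_mk_eq_of_sq_eq_one hZ hmk (sq_eq_one_of_isConj hx (isConj_iff.mpr ⟨y, rfl⟩)) hx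
  exact (mul_inv_eq_iff_eq_mul.mp hconj).symm

end QuotientByCenter

section GammaGraph

variable {G : Type*} [Group G] {h : G}

theorem isConj_mul_of_gammaAdj (hh : h ^ 2 = 1) {x y : G}
    (hxy : gammaAdj {x | IsConj h x} x y) : IsConj h (x * y) := by
  obtain ⟨hx, hy, -, hcomm, hmem | hmem⟩ := hxy
  · rwa [Set.mem_ofPred_eq, inv_eq_self_of_isConj hh hy] at hmem
  · rwa [Set.mem_ofPred_eq, inv_eq_self_of_isConj hh hx, ← hcomm.eq] at hmem

end GammaGraph

namespace Matrix.ProjectiveSpecialLinearGroup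

variable {n F : Type*} [Fintype n] [DecidableEq n] [Field F]

theorem not_exists_gammaAdj_of_rank_add_one_le_one (hodd : Odd (Fintype.card n))
    (hcard : 4 ≤ Fintype.card n) (h2 : (2 : F) ≠ 0) {g : SpecialLinearGroup n F} (hg : g ^ 2 = 1)
    (hrank : ((g : Matrix n n F) + 1).rank ≤ 1) :
    ¬ ∃ x y : ProjectiveSpecialLinearGroup n F,
      gammaAdj {x | IsConj (g : ProjectiveSpecialLinearGroup n F) x} x y := by
  rintro ⟨x, y, hadj⟩
  have hZ : ∀ z ∈ Subgroup.center (SpecialLinearGroup n F), z ^ 2 = 1 → z = 1 := fun _ =>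
    SpecialLinearGroup.eq_one_of_mem_center_of_sq_eq_one hodd
  have hmk : ((g : ProjectiveSpecialLinearGroup n F)) ^ 2 = 1 := by
    rw [← QuotientGroup.mk_pow, hg, QuotientGroup.mk_one]
  have hxy := isConj_mul_of_gammaAdj hmk hadj
  obtain ⟨hx, hy, -, hcomm, -⟩ := hadj
  obtain ⟨X, hgX, rfl⟩ := exists_isConj_mk_eq hx
  obtain ⟨Y, hgY, rfl⟩ := exists_isConj_mk_eq hy
  obtain ⟨W, hgW, hW⟩ := exists_isConj_mk_eq hxy
  have hX2 : X ^ 2 = 1 := sq_eq_one_of_isConj hg hgX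
  have hXY : Commute X Y := commute_of_commute_mk hZ hX2 hcomm
  have hWXY : W = X * Y := eq_of_mk_eq_of_sq_eq_one hZ hW (sq_eq_one_of_isConj hg hgW)
    (by rw [hXY.mul_pow, hX2, sq_eq_one_of_isConj hg hgY, one_mul])
  have hrank_conj : ∀ Z, IsConj g Z → ((Z : Matrix n n F) + 1).rank ≤ 1 := fun Z hgZ =>
    (SpecialLinearGroup.rank_add_one_eq_of_isConj hgZ).trans_le hrank
  have := Matrix.card_le_three_of_rank_add_one_le_one h2
    (by rw [← SpecialLinearGroup.coe_mul, ← sq, hX2, SpecialLinearGroup.coe_one])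
    (hrank_conj X hgX) (hrank_conj Y hgY)
    (by rw [← SpecialLinearGroup.coe_mul, ← hWXY]; exact hrank_conj W hgW)
  omega

end Matrix.ProjectiveSpecialLinearGroup

theorem FiniteField.two_ne_zero_of_odd_card {F : Type*} [Field F] [Fintype F]
    (hq : Odd (Fintype.card F)) : (2 : F) ≠ 0 :=
  Ring.two_ne_zero fun hchar => by
    have := FiniteField.even_card_iff_char_two.mp hchar
    rw [Nat.odd_iff] at hq
    omega

section BinaryAction

variable {G : Type*} [Group G] {h : G}

theorem mem_zpowers_iff_of_sq_eq_one (hh : h ^ 2 = 1) {x : G} :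
    x ∈ Subgroup.zpowers h ↔ x = 1 ∨ x = h := by
  rw [Subgroup.mem_zpowers_iff]
  refine ⟨fun ⟨k, hk⟩ => ?_, ?_⟩
  · rw [← hk, zpow_eq_zpow_emod' k hh]
    rcases Int.emod_two_eq k with hk2 | hk2 <;> simp [hk2]
  · rintro (rfl | rfl)
    exacts [⟨0, zpow_zero _⟩, ⟨1, zpow_one _⟩]

theorem rightCosetMul_mk_eq_mk_iff (hh : h ^ 2 = 1) (g a b : G) :
    rightCosetMul (Subgroup.zpowers h) g (Quotient.mk _ a) = Quotient.mk _ b ↔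
      g ∈ ({a⁻¹ * b, a⁻¹ * h * b} : Set G) := by
  have hinv : h⁻¹ = h := inv_eq_self_of_isConj hh (IsConj.refl h)
  change Quotient.mk _ (a * g) = Quotient.mk _ b ↔ _
  rw [Quotient.eq, QuotientGroup.rightRel_apply, mem_zpowers_iff_of_sq_eq_one hh,
    Set.mem_insert_iff, Set.mem_singleton_iff]
  refine or_congr ⟨fun hg => ?_, fun hg => ?_⟩ ⟨fun hg => ?_, fun hg => ?_⟩
  · rw [mul_inv_eq_one.mp hg]; group
  · rw [hg]; group
  · have hhg : a⁻¹ * h * (h * (a * g)) = a⁻¹ * h ^ 2 * (a * g) := by rw [sq]; group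
    rw [mul_inv_eq_iff_eq_mul.mp hg, hhg, hh]
    group
  · rw [hg, mul_inv_rev, mul_inv_rev, mul_inv_rev, hinv]; group

theorem isConj_inv_mul_of_mem_pair (hh : h ^ 2 = 1) {a b u v : G}
    (hu : u ∈ ({a⁻¹ * b, a⁻¹ * h * b} : Set G)) (hv : v ∈ ({a⁻¹ * b, a⁻¹ * h * b} : Set G))
    (huv : u ≠ v) : IsConj h (u⁻¹ * v) := by
  have hinv : h⁻¹ = h := inv_eq_self_of_isConj hh (IsConj.refl h)
  refine isConj_iff.mpr ⟨b⁻¹, ?_⟩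
  rcases hu with rfl | rfl <;> rcases hv with rfl | rfl
  · exact absurd rfl huv
  · group
  · rw [mul_inv_rev, mul_inv_rev, hinv]; group
  · exact absurd rfl huv

theorem gammaAdj_of_isConj_inv_mul (hh : h ^ 2 = 1) {x y : G} (hx : IsConj h x) (hy : IsConj h y)
    (hxy : x ≠ y) (hxy' : IsConj h (x⁻¹ * y)) : gammaAdj {x | IsConj h x} x y := by
  have hxinv := inv_eq_self_of_isConj hh hx
  have hyinv := inv_eq_self_of_isConj hh hy
  have hcomm : x * y = y * x := by
    simpa [hxinv, hyinv] using (inv_eq_self_of_isConj hh hxy').symm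
  refine ⟨hx, hy, hxy, hcomm, Or.inl ?_⟩
  rwa [Set.mem_ofPred_eq, hyinv, ← hxinv]

theorem exists_forall_mem_or_triangle {α ι : Type*} [Nonempty α] {S : ι → Set α}
    (hS : ∀ t, ∃ p q, S t = {p, q}) (hpair : ∀ i j, (S i ∩ S j).Nonempty) :
    (∃ a, ∀ t, a ∈ S t) ∨
      ∃ (i j k : ι) (u v w : α), u ≠ v ∧ u ≠ w ∧ v ≠ w ∧
        u ∈ S i ∧ v ∈ S i ∧ u ∈ S j ∧ w ∈ S j ∧ v ∈ S k ∧ w ∈ S k := by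
  by_cases hE : ∃ a, ∀ t, a ∈ S t
  · exact Or.inl hE
  simp only [not_exists, not_forall] at hE
  obtain ⟨i, -⟩ := hE (Classical.arbitrary α)
  obtain ⟨p, q, hi⟩ := hS i
  obtain ⟨j, hpj⟩ := hE p
  obtain ⟨k, hqk⟩ := hE q
  have hqj : q ∈ S j := by
    obtain ⟨r, hri, hrj⟩ := hpair i j
    rw [hi] at hri
    rcases hri with rfl | rfl
    exacts [absurd hrj hpj, hrj]
  have hpk : p ∈ S k := by
    obtain ⟨r, hri, hrk⟩ := hpair i k
    rw [hi] at hri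
    rcases hri with rfl | rfl
    exacts [hrk, absurd hrk hqk]
  obtain ⟨r, hrj, hrk⟩ := hpair j k
  refine Or.inr ⟨i, j, k, q, p, r, ?_, ?_, ?_, by simp [hi], by simp [hi], hqj, hrj, hpk, hrk⟩
  · rintro rfl; exact hpj hqj
  · rintro rfl; exact hqk hrk
  · rintro rfl; exact hpj hrj

theorem isBinaryCosetAction_zpowers_of_not_exists_gammaAdj (hh : h ^ 2 = 1)
    (hΓ : ¬ ∃ x y, gammaAdj {x | IsConj h x} x y) : IsBinaryCosetAction (Subgroup.zpowers h) := by
  intro m I J hpair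
  set S : Fin m → Set G := fun k => {(I k).out⁻¹ * (J k).out, (I k).out⁻¹ * h * (J k).out}
  have hS : ∀ g k, rightCosetMul _ g (I k) = J k ↔ g ∈ S k := fun g k => by
    rw [← Quotient.out_eq (I k), ← Quotient.out_eq (J k), rightCosetMul_mk_eq_mk_iff hh]
  obtain ⟨a, ha⟩ | ⟨i, j, k, u, v, w, huv, huw, hvw, hui, hvi, huj, hwj, hvk, hwk⟩ :=
    exists_forall_mem_or_triangle (S := S) (fun _ => ⟨_, _, rfl⟩) fun i j =>
      let ⟨g, hgi, hgj⟩ := hpair i j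
      ⟨g, (hS g i).mp hgi, (hS g j).mp hgj⟩
  · exact ⟨a, fun k => (hS a k).mpr (ha k)⟩
  · have hvw' : IsConj h ((u⁻¹ * v)⁻¹ * (u⁻¹ * w)) := by
      rw [show (u⁻¹ * v)⁻¹ * (u⁻¹ * w) = v⁻¹ * w by group]
      exact isConj_inv_mul_of_mem_pair hh hvk hwk hvw
    exact absurd ⟨_, _, gammaAdj_of_isConj_inv_mul hh (isConj_inv_mul_of_mem_pair hh hui hvi huv)
      (isConj_inv_mul_of_mem_pair hh huj hwj huw) (fun h => hvw (mul_left_cancel h)) hvw'⟩ hΓ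

end BinaryAction

theorem stmt18 {n : ℕ} (hn : 5 ≤ n) (hnodd : Odd n)
    {F : Type*} [Field F] [Fintype F] (hq : Odd (Fintype.card F))
    (g₀ : Matrix.SpecialLinearGroup (Fin n) F)
    (hg₀ : (g₀ : Matrix (Fin n) (Fin n) F) =
      Matrix.diagonal (fun i : Fin n => if (i : ℕ) = 0 then 1 else -1))
    (h₀ : Matrix.ProjectiveSpecialLinearGroup (Fin n) F)
    (hh₀ : h₀ = QuotientGroup.mk g₀)
    (C : Set (Matrix.ProjectiveSpecialLinearGroup (Fin n) F))
    (hC : C = {x | IsConj h₀ x}) :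
    (¬ ∃ x y, gammaAdj C x y) ∧ IsBinaryCosetAction (Subgroup.zpowers h₀) := by
  subst hC hh₀
  have hsq : g₀ ^ 2 = 1 := Subtype.ext <| by
    rw [Matrix.SpecialLinearGroup.coe_pow, hg₀, Matrix.diagonal_pow,
      Matrix.SpecialLinearGroup.coe_one, ← Matrix.diagonal_one]
    congr 1
    funext i
    rw [Pi.pow_apply]
    split_ifs <;> simp
  have hrank : ((g₀ : Matrix (Fin n) (Fin n) F) + 1).rank ≤ 1 := by
    rw [hg₀]
    exact Matrix.rank_diagonal_add_one_le_one ⟨0, by omega⟩ fun i hi =>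
      if_neg fun h => hi (Fin.ext h)
  have hΓ := Matrix.ProjectiveSpecialLinearGroup.not_exists_gammaAdj_of_rank_add_one_le_one
    (by rwa [Fintype.card_fin]) (by rw [Fintype.card_fin]; omega)
    (FiniteField.two_ne_zero_of_odd_card hq) hsq hrank
  refine ⟨hΓ, isBinaryCosetAction_zpowers_of_not_exists_gammaAdj ?_ hΓ⟩
  rw [← QuotientGroup.mk_pow, hsq, QuotientGroup.mk_one]
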